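/- If a 3-SAT instance with n variables is satisfiable, then in the 3-SAT total-bondage construction, the set consisting of s_2, s_4, all v_i (i = 1,…,n), together with, for each variable u_i, the literal vertex made true by a satisfying assignment, is a total dominating set of size 2n + 2. -/
import Mathlib


/-- A literal over `n` variables: a variable index together with a polarity
(`true` = the positive literal `uᵢ`, `false` = the negated literal `ūᵢ`). -/
abbrev Lit (n : ℕ) := Fin n × Bool

/-- Vertex type of the total-bondage construction: literal vertices `uᵢ, ūᵢ`,
gadget vertices `vᵢ` (second component `false`) and `vᵢ'` (second component
`true`), clause vertices `cⱼ`, and the vertices `s₁, …, s₅`. -/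
abbrev TVert (n m : ℕ) := Lit n ⊕ ((Fin n × Bool) ⊕ (Fin m ⊕ Fin 5))

/-- The literal vertex `uᵢ` (if `b = true`) or `ūᵢ` (if `b = false`). -/
def tlit {n m : ℕ} (i : Fin n) (b : Bool) : TVert n m := Sum.inl (i, b)

/-- The gadget vertex `vᵢ`. -/
def tvv {n m : ℕ} (i : Fin n) : TVert n m := Sum.inr (Sum.inl (i, false))

/-- The gadget vertex `vᵢ'`. -/
def tvv' {n m : ℕ} (i : Fin n) : TVert n m := Sum.inr (Sum.inl (i, true))

/-- The clause vertex `cⱼ`. -/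
def tcv {n m : ℕ} (j : Fin m) : TVert n m := Sum.inr (Sum.inr (Sum.inl j))

/-- The vertex `s₍ₖ₊₁₎` for `k : Fin 5` (so `tsv 0 = s₁`, …, `tsv 4 = s₅`). -/
def tsv {n m : ℕ} (k : Fin 5) : TVert n m := Sum.inr (Sum.inr (Sum.inr k))

/-- Base adjacency relation of the total-bondage construction (symmetrized by
`fromRel`): gadget edges `vᵢuᵢ, uᵢūᵢ, ūᵢvᵢ, vᵢvᵢ'`; clause edges joining `cⱼ`
to its three literals; gadget `H` edges `s₁s₂, s₁s₄, s₂s₃, s₂s₄, s₄s₅`; and the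
edges joining `s₁` and `s₃` to every `cⱼ`. -/
def totRel {n m : ℕ} (C : Fin m → Fin 3 → Lit n) : TVert n m → TVert n m → Prop
  | Sum.inl (i, b), Sum.inl (i', b') => i = i' ∧ b ≠ b'
  | Sum.inl (i, _), Sum.inr (Sum.inl (i', c)) => i = i' ∧ c = false
  | Sum.inr (Sum.inl (i, false)), Sum.inr (Sum.inl (i', true)) => i = i'
  | Sum.inl l, Sum.inr (Sum.inr (Sum.inl j)) => ∃ k, C j k = l
  | Sum.inr (Sum.inr (Sum.inr p)), Sum.inr (Sum.inr (Sum.inr q)) =>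
      (p = 0 ∧ q = 1) ∨ (p = 0 ∧ q = 3) ∨ (p = 1 ∧ q = 2) ∨ (p = 1 ∧ q = 3) ∨
        (p = 3 ∧ q = 4)
  | Sum.inr (Sum.inr (Sum.inr p)), Sum.inr (Sum.inr (Sum.inl _)) => p = 0 ∨ p = 2
  | _, _ => False

/-- The graph of the total-bondage construction associated with a 3-SAT instance `C`. -/
def totGraph {n m : ℕ} (C : Fin m → Fin 3 → Lit n) : SimpleGraph (TVert n m) :=
  SimpleGraph.fromRel (totRel C)

/-- `D` is a total dominating set of `G`: every vertex of `G` (including the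
vertices of `D`) has a neighbor in `D`. -/
def IsTotalDomSet {V : Type*} (G : SimpleGraph V) (D : Finset V) : Prop :=
  ∀ v : V, ∃ u ∈ D, G.Adj u v

/-- The total domination number of `G`: the minimum cardinality of a total
dominating set. -/
noncomputable def totalDomNum {V : Type*} (G : SimpleGraph V) : ℕ :=
  sInf {k | ∃ D : Finset V, IsTotalDomSet G D ∧ D.card = k}

/-- If `t` is a satisfying assignment of the 3-SAT instance, then in the
total-bondage construction the set consisting of `s₂`, `s₄`, all the `vᵢ`, and
the true literal vertex of each variable is a total dominating set of size
`2n + 2`. -/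
theorem totGraph_satisfying_totalDomSet {n m : ℕ} (C : Fin m → Fin 3 → Lit n)
    (t : Fin n → Bool) (ht : ∀ j : Fin m, ∃ k : Fin 3, t (C j k).1 = (C j k).2) :
    IsTotalDomSet (totGraph C)
        ({tsv 1, tsv 3} ∪ Finset.image (fun i => tvv i) Finset.univ ∪
          Finset.image (fun i => tlit i (t i)) Finset.univ) ∧
      ({tsv 1, tsv 3} ∪ Finset.image (fun i => tvv i) Finset.univ ∪
        Finset.image (fun i => tlit i (t i)) Finset.univ :
          Finset (TVert n m)).card = 2 * n + 2 := by

  have adj : ∀ a b : TVert n m, (totRel C a b ∨ totRel C b a) → a ≠ b →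
      (totGraph C).Adj a b := fun a b h hne => ⟨hne, h⟩
  constructor
  · intro v
    rcases v with ⟨i, b⟩ | ⟨i, c⟩ | j | k
    · -- literal vertex
      refine ⟨tvv i, by simp, adj _ _ (Or.inr ⟨rfl, rfl⟩) (by simp [tvv, tlit])⟩
    · -- vᵢ or vᵢ'
      cases c
      · exact ⟨tlit i (t i), by simp, adj _ _ (Or.inl ⟨rfl, rfl⟩) (by simp [tvv, tlit])⟩
      · exact ⟨tvv i, by simp, adj _ _ (Or.inl rfl) (by simp [tvv])⟩
    · -- clause vertex
      obtain ⟨k, hk⟩ := ht j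
      refine ⟨tlit (C j k).1 (t (C j k).1), by simp, adj _ _ (Or.inl ?_) (by simp [tlit, tcv])⟩
      show totRel C (Sum.inl ((C j k).1, t (C j k).1)) (tcv j)
      rw [hk]
      exact ⟨k, rfl⟩
    · -- s vertices
      fin_cases k
      · exact ⟨tsv 1, by simp, adj _ _ (by simp [tsv, totRel]) (by simp [tsv])⟩
      · exact ⟨tsv 3, by simp, adj _ _ (by simp [tsv, totRel]) (by simp [tsv])⟩
      · exact ⟨tsv 1, by simp, adj _ _ (by simp [tsv, totRel]) (by simp [tsv])⟩
      · exact ⟨tsv 1, by simp, adj _ _ (by simp [tsv, totRel]) (by simp [tsv])⟩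
      · exact ⟨tsv 3, by simp, adj _ _ (by simp [tsv, totRel]) (by simp [tsv])⟩
  · rw [Finset.card_union_of_disjoint, Finset.card_union_of_disjoint,
      Finset.card_image_of_injective _ (fun a b h => by simpa [tvv] using h),
      Finset.card_image_of_injective _ (fun a b h => by simp [tlit] at h; exact h.1)]
    · simp [tsv]; ring
    · simp [Finset.disjoint_left, tsv, tvv]
    · simp [Finset.disjoint_left, tsv, tvv, tlit]
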